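/- Let E, F be Banach spaces and T : E → F a bounded operator. Define the residuum operator T^co : E**/E → F**/F by T^co(x + E) = T**(x) + F for x ∈ E**. Then T^co is well defined, linear, bounded with ‖T^co‖ ≤ ‖T‖, and T^co = 0 if and only if T is weakly compact. -/

import Mathlib

open NormedSpace

/-- An operator between normed spaces is weakly compact if the image of the closed unit
ball is contained in a weakly compact set. -/
def IsWeaklyCompactOperator {E F : Type*} [NormedAddCommGroup E] [NormedSpace ℝ E]
    [NormedAddCommGroup F] [NormedSpace ℝ F] (T : E →L[ℝ] F) : Prop :=
  ∃ C : Set (WeakSpace ℝ F), IsCompact C ∧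
    ∀ x ∈ Metric.closedBall (0 : E) 1, toWeakSpace ℝ F (T x) ∈ C

/-- The double adjoint `T** : E** → F**` of a bounded operator `T : E → F`. -/
noncomputable def bidualMap {E F : Type*} [NormedAddCommGroup E] [NormedSpace ℝ E]
    [NormedAddCommGroup F] [NormedSpace ℝ F] (T : E →L[ℝ] F) :
    StrongDual ℝ (StrongDual ℝ E) →L[ℝ] StrongDual ℝ (StrongDual ℝ F) :=
  (ContinuousLinearMap.compL ℝ (StrongDual ℝ F) (StrongDual ℝ E) ℝ).flip
    ((ContinuousLinearMap.compL ℝ E F ℝ).flip T)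

noncomputable instance instSeminormedAddCommGroupBidual (E : Type*) [NormedAddCommGroup E]
    [NormedSpace ℝ E] : SeminormedAddCommGroup (StrongDual ℝ (StrongDual ℝ E)) :=
  inferInstance

noncomputable instance instNormedSpaceBidual (E : Type*) [NormedAddCommGroup E]
    [NormedSpace ℝ E] : NormedSpace ℝ (StrongDual ℝ (StrongDual ℝ E)) :=
  inferInstance

/-! `T**` maps the canonical copy of `E` into that of `F`, so it descends to the quotients, and
`‖T^co‖ ≤ ‖T**‖ ≤ ‖T‖`. The vanishing of `T^co` says `T**(E**) ⊆ F`, which is Gantmacher's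
theorem. If `T` maps the unit ball into a weakly compact set `C`, then by Goldstine's theorem
(the ball of `E` is weak*-dense in that of `E**`; Hahn–Banach, since weak*-continuous functionals
on `E**` are evaluations at points of `E*`) and weak*-continuity of `T**`, the image of the ball
of `E**` lies in the weak*-closed set `C ⊆ F`. Conversely, if `T**(E**) ⊆ F`, the image of the
ball of `E` lies in the weak*-compact set `T**(ball E**) ⊆ F` (Banach–Alaoglu), so its weak closure
is weakly compact. -/

open ContinuousLinearMap

theorem WeakDual.exists_eq_apply_of_continuousLinearMap {𝕜 V : Type*} [NontriviallyNormedField 𝕜]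
    [AddCommGroup V] [TopologicalSpace V] [Module 𝕜 V] (φ : WeakDual 𝕜 V →L[𝕜] 𝕜) :
    ∃ v : V, ∀ z : WeakDual 𝕜 V, φ z = z v := by
  obtain ⟨v, rfl⟩ := LinearMap.dualEmbedding_surjective (topDualPairing 𝕜 V) φ
  exact ⟨v, fun _ => rfl⟩

theorem StrongDual.norm_le_of_forall_closedBall_apply_le {V : Type*} [SeminormedAddCommGroup V]
    [NormedSpace ℝ V] (g : StrongDual ℝ V) {u : ℝ}
    (hg : ∀ v ∈ Metric.closedBall (0 : V) 1, g v ≤ u) : ‖g‖ ≤ u := by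
  have hu : 0 ≤ u := by simpa using hg 0 (by simp)
  refine opNorm_le_of_unit_norm hu fun v hv => abs_le.2 ⟨?_, hg v (by simp [hv])⟩
  have := hg (-v) (by simp [hv])
  rw [map_neg] at this
  linarith

theorem Submodule.norm_liftQL_le {𝕜 M N : Type*} [NontriviallyNormedField 𝕜]
    [SeminormedAddCommGroup M] [NormedSpace 𝕜 M] [SeminormedAddCommGroup N] [NormedSpace 𝕜 N]
    (S : Submodule 𝕜 M) (f : M →L[𝕜] N) (h : S ≤ f.ker) : ‖S.liftQL f h‖ ≤ ‖f‖ := by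
  refine opNorm_le_bound _ (norm_nonneg f) fun q => ?_
  let g : NormedAddGroupHom M N :=
    f.toLinearMap.toAddMonoidHom.mkNormedAddGroupHom ‖f‖ f.le_opNorm
  calc ‖S.liftQL f h q‖ ≤ ‖g‖ * ‖q‖ :=
        QuotientAddGroup.norm_lift_apply_le (S := S.toAddSubgroup) g h q
    _ ≤ ‖f‖ * ‖q‖ := by
        gcongr; exact NormedAddGroupHom.mkNormedAddGroupHom_norm_le _ (norm_nonneg f) _

namespace NormedSpace

variable {E : Type*} [NormedAddCommGroup E] [NormedSpace ℝ E]

theorem mem_closure_image_inclusionInDoubleDualWeak_closedBall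
    {x : StrongDual ℝ (StrongDual ℝ E)} (hx : ‖x‖ ≤ 1) :
    StrongDual.toWeakDual x ∈
      closure (inclusionInDoubleDualWeak ℝ E '' (toWeakSpace ℝ E '' Metric.closedBall 0 1)) := by
  by_contra hxK
  have : LocallyConvexSpace ℝ (WeakDual ℝ (StrongDual ℝ E)) := WeakBilin.locallyConvexSpace
  have hK : Convex ℝ
      (closure (inclusionInDoubleDualWeak ℝ E '' (toWeakSpace ℝ E '' Metric.closedBall 0 1))) :=
    (((convex_closedBall (0 : E) 1).linear_image (toWeakSpace ℝ E).toLinearMap).linear_image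
      (inclusionInDoubleDualWeak ℝ E).toLinearMap).closure
  obtain ⟨φ, u, hφK, hφx⟩ := geometric_hahn_banach_closed_point hK isClosed_closure hxK
  obtain ⟨g, hg⟩ := WeakDual.exists_eq_apply_of_continuousLinearMap φ
  have hgu : ∀ e ∈ Metric.closedBall (0 : E) 1, g e ≤ u := fun e he =>
    (hg _ ▸ hφK _ (subset_closure ⟨_, ⟨e, he, rfl⟩, rfl⟩)).le
  have hxg : x g ≤ u :=
    calc x g ≤ ‖x‖ * ‖g‖ := (le_abs_self _).trans (x.le_opNorm g)
      _ ≤ 1 * u := by gcongr; exact g.norm_le_of_forall_closedBall_apply_le hgu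
      _ = u := one_mul u
  rw [hg] at hφx
  exact (hxg.trans_lt hφx).false

end NormedSpace

section Bidual

variable {E F : Type*} [NormedAddCommGroup E] [NormedSpace ℝ E]
  [NormedAddCommGroup F] [NormedSpace ℝ F]

theorem norm_bidualMap_le (T : E →L[ℝ] F) : ‖bidualMap T‖ ≤ ‖T‖ :=
  calc ‖bidualMap T‖
      ≤ ‖(compL ℝ (StrongDual ℝ F) (StrongDual ℝ E) ℝ).flip‖ * ‖(compL ℝ E F ℝ).flip T‖ :=
        le_opNorm _ _
    _ ≤ 1 * (1 * ‖T‖) := by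
        gcongr
        · rw [opNorm_flip]; exact norm_compL_le _ _ _ _
        · exact (le_opNorm _ _).trans (by rw [opNorm_flip]; gcongr; exact norm_compL_le _ _ _ _)
    _ = ‖T‖ := by ring

noncomputable def bidualMapWeak (T : E →L[ℝ] F) :
    WeakDual ℝ (StrongDual ℝ E) →L[ℝ] WeakDual ℝ (StrongDual ℝ F) where
  toLinearMap := StrongDual.toWeakDual.arrowCongr StrongDual.toWeakDual (bidualMap T).toLinearMap
  cont := WeakDual.continuous_of_continuous_eval fun g => WeakDual.eval_continuous (g.comp T)

theorem bidualMap_mem_range_of_isWeaklyCompactOperator {T : E →L[ℝ] F}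
    (hT : IsWeaklyCompactOperator T) (x : StrongDual ℝ (StrongDual ℝ E)) :
    bidualMap T x ∈ LinearMap.range (inclusionInDoubleDual ℝ F).toLinearMap := by
  obtain ⟨C, hC, hTC⟩ := hT
  have hK : IsClosed (inclusionInDoubleDualWeak ℝ F '' C) :=
    (hC.image (inclusionInDoubleDualWeak ℝ F).continuous).isClosed
  have hball : ∀ x : StrongDual ℝ (StrongDual ℝ E), ‖x‖ ≤ 1 →
      bidualMap T x ∈ LinearMap.range (inclusionInDoubleDual ℝ F).toLinearMap := by
    intro x hx
    have hmaps : Set.MapsTo (bidualMapWeak T)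
        (inclusionInDoubleDualWeak ℝ E '' (toWeakSpace ℝ E '' Metric.closedBall 0 1))
        (inclusionInDoubleDualWeak ℝ F '' C) := by
      rintro _ ⟨_, ⟨e, he, rfl⟩, rfl⟩
      exact ⟨_, hTC e he, rfl⟩
    obtain ⟨y, -, hy⟩ := hK.closure_eq ▸ map_mem_closure (bidualMapWeak T).continuous
      (mem_closure_image_inclusionInDoubleDualWeak_closedBall hx) hmaps
    exact ⟨y, hy⟩
  rcases eq_or_ne x 0 with rfl | hx
  · simp
  · have hx' : ‖x‖ ≠ 0 := mt x.opNorm_zero_iff.mp hx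
    have := Submodule.smul_mem _ ‖x‖ (hball (‖x‖⁻¹ • x) (by
      rw [norm_smul, norm_inv, norm_norm, inv_mul_cancel₀ hx']))
    rwa [map_smul, smul_smul, mul_inv_cancel₀ hx', one_smul] at this

theorem isWeaklyCompactOperator_of_bidualMap_mem_range {T : E →L[ℝ] F}
    (hT : ∀ x : StrongDual ℝ (StrongDual ℝ E),
      bidualMap T x ∈ LinearMap.range (inclusionInDoubleDual ℝ F).toLinearMap) :
    IsWeaklyCompactOperator T := by
  set S := toWeakSpace ℝ F '' (T '' Metric.closedBall 0 1)
  set B : Set (WeakDual ℝ (StrongDual ℝ E)) := WeakDual.toStrongDual ⁻¹' Metric.closedBall 0 1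
  have hB : IsCompact (bidualMapWeak T '' B) :=
    (WeakDual.isCompact_closedBall 0 1).image (bidualMapWeak T).continuous
  have hSB : inclusionInDoubleDualWeak ℝ F '' S ⊆ bidualMapWeak T '' B := by
    rintro _ ⟨_, ⟨_, ⟨e, he, rfl⟩, rfl⟩, rfl⟩
    refine ⟨StrongDual.toWeakDual (inclusionInDoubleDual ℝ E e), ?_, rfl⟩
    simpa [B] using (double_dual_bound ℝ E e).trans (by simpa using he)
  have hBrange : bidualMapWeak T '' B ⊆ Set.range (inclusionInDoubleDualWeak ℝ F) := by
    rintro _ ⟨z, -, rfl⟩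
    obtain ⟨y, hy⟩ := hT (WeakDual.toStrongDual z)
    exact ⟨toWeakSpace ℝ F y, congrArg StrongDual.toWeakDual hy⟩
  refine ⟨closure S, isCompact_closure_of_isBounded ℝ F S ?_ ?_, fun e he =>
    subset_closure ⟨T e, ⟨e, he, rfl⟩, rfl⟩⟩
  · rw [Set.preimage_image_eq _ (toWeakSpace ℝ F).injective]
    exact T.lipschitz.isBounded_image Metric.isBounded_closedBall
  · exact (closure_minimal hSB hB.isClosed).trans hBrange

theorem isWeaklyCompactOperator_iff_forall_bidualMap_mem_range {T : E →L[ℝ] F} :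
    IsWeaklyCompactOperator T ↔ ∀ x : StrongDual ℝ (StrongDual ℝ E),
      bidualMap T x ∈ LinearMap.range (inclusionInDoubleDual ℝ F).toLinearMap :=
  ⟨bidualMap_mem_range_of_isWeaklyCompactOperator, isWeaklyCompactOperator_of_bidualMap_mem_range⟩

noncomputable def residuumMap (T : E →L[ℝ] F) :
    (StrongDual ℝ (StrongDual ℝ E) ⧸ LinearMap.range (inclusionInDoubleDual ℝ E).toLinearMap) →L[ℝ]
      (StrongDual ℝ (StrongDual ℝ F) ⧸ LinearMap.range (inclusionInDoubleDual ℝ F).toLinearMap) :=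
  Submodule.liftQL _ ((Submodule.mkQL _).comp (bidualMap T)) <| by
    rintro _ ⟨e, rfl⟩
    exact (Submodule.Quotient.mk_eq_zero _).2 ⟨T e, rfl⟩

theorem residuumMap_mk (T : E →L[ℝ] F) (x : StrongDual ℝ (StrongDual ℝ E)) :
    residuumMap T (Submodule.Quotient.mk x) = Submodule.Quotient.mk (bidualMap T x) := rfl

theorem norm_residuumMap_le (T : E →L[ℝ] F) : ‖residuumMap T‖ ≤ ‖T‖ :=
  calc ‖residuumMap T‖ ≤ ‖(Submodule.mkQL _).comp (bidualMap T)‖ := Submodule.norm_liftQL_le _ _ _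
    _ ≤ ‖bidualMap T‖ := opNorm_le_bound _ (norm_nonneg _) fun x =>
        (Submodule.Quotient.norm_mk_le _ _).trans (le_opNorm _ x)
    _ ≤ ‖T‖ := norm_bidualMap_le T

theorem residuumMap_eq_zero_iff (T : E →L[ℝ] F) : residuumMap T = 0 ↔
    ∀ x : StrongDual ℝ (StrongDual ℝ E),
      bidualMap T x ∈ LinearMap.range (inclusionInDoubleDual ℝ F).toLinearMap := by
  simp only [← Submodule.Quotient.mk_eq_zero, ← residuumMap_mk]
  refine ⟨fun h x => by rw [h, zero_apply], fun h => ?_⟩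
  ext q
  induction q using Submodule.Quotient.induction_on
  exact h _

end Bidual

theorem residuum_operator_exists_unique_general
    {E F : Type*} [NormedAddCommGroup E] [NormedSpace ℝ E]
    [NormedAddCommGroup F] [NormedSpace ℝ F]
    (T : E →L[ℝ] F) :
    ∃! Tco : (StrongDual ℝ (StrongDual ℝ E) ⧸ LinearMap.range (inclusionInDoubleDual ℝ E).toLinearMap) →L[ℝ]
        (StrongDual ℝ (StrongDual ℝ F) ⧸ LinearMap.range (inclusionInDoubleDual ℝ F).toLinearMap),
      (∀ x : StrongDual ℝ (StrongDual ℝ E),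
        Tco (Submodule.Quotient.mk x) = Submodule.Quotient.mk (bidualMap T x)) ∧
      ‖Tco‖ ≤ ‖T‖ ∧
      (Tco = 0 ↔ IsWeaklyCompactOperator T) := by
  refine ⟨residuumMap T, ⟨residuumMap_mk T, norm_residuumMap_le T,
    (residuumMap_eq_zero_iff T).trans isWeaklyCompactOperator_iff_forall_bidualMap_mem_range.symm⟩,
    fun S ⟨hS, _⟩ => ?_⟩
  ext q
  induction q using Submodule.Quotient.induction_on
  exact hS _

/-- The residuum operator `T^co : E**/E → F**/F`,
`x + E ↦ T**(x) + F`, is well defined, linear and bounded with `‖T^co‖ ≤ ‖T‖`, and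
`T^co = 0` iff `T` is weakly compact (Gantmacher). -/
theorem residuum_operator_exists_unique
    {E F : Type*} [NormedAddCommGroup E] [NormedSpace ℝ E] [CompleteSpace E]
    [NormedAddCommGroup F] [NormedSpace ℝ F] [CompleteSpace F]
    (T : E →L[ℝ] F) :
    ∃! Tco : (StrongDual ℝ (StrongDual ℝ E) ⧸ LinearMap.range (inclusionInDoubleDual ℝ E).toLinearMap) →L[ℝ]
        (StrongDual ℝ (StrongDual ℝ F) ⧸ LinearMap.range (inclusionInDoubleDual ℝ F).toLinearMap),
      (∀ x : StrongDual ℝ (StrongDual ℝ E),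
        Tco (Submodule.Quotient.mk x) = Submodule.Quotient.mk (bidualMap T x)) ∧
      ‖Tco‖ ≤ ‖T‖ ∧
      (Tco = 0 ↔ IsWeaklyCompactOperator T) :=
  residuum_operator_exists_unique_general T
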